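/- Let γ ∈ [0,1) and (b_j)_{j≥1} be real numbers with b_j ~ β j^{d−1} as j → ∞ for some 0 < d < 1/2 and β > 0, and with B₂ := Σ_{j≥1} b_j² satisfying B₂/(1−γ) < 1. Define b̃²_{j,γ} := Σ_{i=0}^{j−1} γ^i b²_{j−i} and let (φ_{j,γ})_{j≥0} be the coefficients of the power series Φ_γ(z) := Σ_{j≥0} φ_{j,γ} z^j = (1 − Σ_{j≥1} b̃²_{j,γ} z^j)^{−1}, |z| < 1; explicitly φ_{0,γ} = 1 and φ_{j,γ} = b̃²_{j,γ} + Σ_{0<k<j} Σ_{0<s₁<…<s_k<j} b̃²_{s₁,γ} b̃²_{s₂−s₁,γ} ⋯ b̃²_{j−s_k,γ} for j ≥ 1. Then φ_{t,γ} = O(t^{2d−2}) as t → ∞, and Φ_γ(1) = Σ_{t≥0} φ_{t,γ} = (1−γ)/(1−γ−B₂) < ∞. -/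

import Mathlib

noncomputable section

/-- For a finite set `S = {s₁ < s₂ < … < s_k} ⊆ (0, j)` the product
`α_{s₁} α_{s₂-s₁} ⋯ α_{s_k-s_{k-1}} α_{j-s_k}` (for `S = ∅` this is just `α_j`). -/
def chainProd (α : ℕ → ℝ) (j : ℕ) (S : Finset ℕ) : ℝ :=
  (List.zipWith (fun x y => α (y - x))
    (0 :: S.sort (· ≤ ·)) (S.sort (· ≤ ·) ++ [j])).prod

/-- `b̃²_{j,γ} := ∑_{i=0}^{j-1} γ^i b²_{j-i}`. -/
def btildeSq (γ : ℝ) (b : ℕ → ℝ) (j : ℕ) : ℝ :=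
  ∑ i ∈ Finset.range j, γ ^ i * b (j - i) ^ 2

/-- The coefficients `φ_{j,γ}` of the power series
`Φ_γ(z) = ∑_{j≥0} φ_{j,γ} z^j = (1 - ∑_{j≥1} b̃²_{j,γ} z^j)^{-1}`:
`φ_{0,γ} = 1` and, for `j ≥ 1`,
`φ_{j,γ} = b̃²_{j,γ} + ∑_{0<k<j} ∑_{0<s₁<…<s_k<j} b̃²_{s₁,γ} b̃²_{s₂-s₁,γ} ⋯ b̃²_{j-s_k,γ}`
(the sum over all subsets of `(0, j)` of the corresponding chain products). -/
def phiCoeff (γ : ℝ) (b : ℕ → ℝ) : ℕ → ℝ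
  | 0 => 1
  | (j + 1) => ∑ S ∈ (Finset.Ioo 0 (j + 1)).powerset, chainProd (btildeSq γ b) (j + 1) S

lemma mem_zipWith' {f : ℕ → ℕ → ℝ} : ∀ {l1 l2 : List ℕ} {x : ℝ},
    x ∈ List.zipWith f l1 l2 → ∃ a b, x = f a b
  | a :: l1, b :: l2, x, hx => by
    rcases List.mem_cons.1 hx with h | h
    · exact ⟨a, b, h⟩
    · exact mem_zipWith' h

lemma chainProd_nonneg {α : ℕ → ℝ} (hα : ∀ j, 0 ≤ α j) (n : ℕ) (S : Finset ℕ) :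
    0 ≤ chainProd α n S := by
  apply List.prod_nonneg
  intro a ha
  obtain ⟨x, y, rfl⟩ := mem_zipWith' ha
  exact hα _

lemma chainProd_empty (α : ℕ → ℝ) (n : ℕ) : chainProd α n ∅ = α n := by
  simp [chainProd]

lemma sort_insert_max {s : ℕ} {T : Finset ℕ} (hs : ∀ t ∈ T, t < s) :
    (insert s T).sort (· ≤ ·) = T.sort (· ≤ ·) ++ [s] := by
  have hsT : s ∉ T := fun h => lt_irrefl s (hs s h)
  refine (fun hp h1 h2 => List.Perm.eq_of_pairwise' h1 h2 hp) ?_ (Finset.pairwise_sort _ _) ?_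
  · exact (Finset.sort_perm_toList _ _).trans ((Finset.toList_insert hsT).trans
      ((List.Perm.cons s (Finset.sort_perm_toList _ _).symm).trans
        (List.perm_append_singleton _ _).symm))
  · rw [List.pairwise_append]
    refine ⟨Finset.pairwise_sort _ _, List.pairwise_singleton _ _, ?_⟩
    intro a ha b hb
    rw [List.mem_singleton] at hb
    subst hb
    exact (hs a (by simpa using ha)).le

lemma chainProd_insert_max {α : ℕ → ℝ} {s n : ℕ} {T : Finset ℕ}
    (hs : ∀ t ∈ T, t < s) :
    chainProd α n (insert s T) = chainProd α s T * α (n - s) := by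
  rw [chainProd, chainProd, sort_insert_max hs]
  have h1 : (0 : ℕ) :: (T.sort (· ≤ ·) ++ [s]) = (0 :: T.sort (· ≤ ·)) ++ [s] := rfl
  have h2 : (T.sort (· ≤ ·) ++ [s]) ++ [n] = (T.sort (· ≤ ·) ++ [s]) ++ [n] := rfl
  rw [h1, List.zipWith_append (by simp), List.prod_append]
  simp


lemma phiCoeff_pos_eq (γ : ℝ) (b : ℕ → ℝ) {n : ℕ} (hn : 0 < n) :
    phiCoeff γ b n = ∑ S ∈ (Finset.Ioo 0 n).powerset, chainProd (btildeSq γ b) n S := by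
  cases n with
  | zero => omega
  | succ j => rfl

lemma phiCoeff_rec (γ : ℝ) (b : ℕ → ℝ) {n : ℕ} (hn : 0 < n) :
    phiCoeff γ b n = ∑ s ∈ Finset.range n, phiCoeff γ b s * btildeSq γ b (n - s) := by
  classical
  set α := btildeSq γ b with hα
  rw [phiCoeff_pos_eq γ b hn]
  have key : ∑ S ∈ (Finset.Ioo 0 n).powerset, chainProd α n S
      = chainProd α n ∅ + ∑ p ∈ (Finset.Ioo 0 n).sigma (fun s => (Finset.Ioo 0 s).powerset),
          chainProd α n (insert p.1 p.2) := by
    rw [← Finset.add_sum_erase _ _ (Finset.empty_mem_powerset _)]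
    congr 1
    refine Finset.sum_bij'
      (fun (S : Finset ℕ) (hS : S ∈ ((Finset.Ioo 0 n).powerset).erase ∅) =>
        (⟨S.max' (Finset.nonempty_iff_ne_empty.2 (Finset.mem_erase.1 hS).1),
        S.erase (S.max' (Finset.nonempty_iff_ne_empty.2 (Finset.mem_erase.1 hS).1))⟩ : Σ _ : ℕ, Finset ℕ))
      (fun (p : Σ _ : ℕ, Finset ℕ) (_ : p ∈ (Finset.Ioo 0 n).sigma (fun s => (Finset.Ioo 0 s).powerset)) => insert p.1 p.2)
      ?_ ?_ ?_ ?_ ?_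
    · intro S hS
      have hS' := hS
      rw [Finset.mem_erase, Finset.mem_powerset] at hS'
      obtain ⟨hne, hsub⟩ := hS'
      rw [Finset.mem_sigma]
      constructor
      · exact hsub (S.max'_mem (Finset.nonempty_iff_ne_empty.2 hne))
      · rw [Finset.mem_powerset]
        intro x hx
        rw [Finset.mem_erase] at hx
        rw [Finset.mem_Ioo]
        exact ⟨(Finset.mem_Ioo.1 (hsub hx.2)).1, lt_of_le_of_ne (S.le_max' x hx.2) hx.1⟩
    · rintro ⟨s, T⟩ hp
      rw [Finset.mem_sigma] at hp
      obtain ⟨hs, hT⟩ := hp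
      rw [Finset.mem_powerset] at hT
      rw [Finset.mem_erase]
      refine ⟨Finset.insert_ne_empty _ _, Finset.mem_powerset.2 ?_⟩
      exact Finset.insert_subset hs (hT.trans (Finset.Ioo_subset_Ioo le_rfl (Finset.mem_Ioo.1 hs).2.le))
    · intro S hS
      exact Finset.insert_erase (S.max'_mem (Finset.nonempty_iff_ne_empty.2 (Finset.mem_erase.1 hS).1))
    · rintro ⟨s, T⟩ hp
      rw [Finset.mem_sigma, Finset.mem_powerset] at hp
      obtain ⟨hs, hT⟩ := hp
      have hlt : ∀ t ∈ T, t < s := fun t ht => (Finset.mem_Ioo.1 (hT ht)).2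
      have hsT : s ∉ T := fun h => lt_irrefl s (hlt s h)
      have hmax : (insert s T).max' (Finset.insert_nonempty s T) = s := by
        apply le_antisymm
        · apply Finset.max'_le
          intro y hy
          rcases Finset.mem_insert.1 hy with rfl | hy
          · exact le_rfl
          · exact (hlt y hy).le
        · exact Finset.le_max' _ s (Finset.mem_insert_self s T)
      refine Sigma.ext ?_ ?_ <;> simp only [hmax]
      exact heq_of_eq (by rw [Finset.erase_insert hsT])
    · intro S hS
      conv_lhs => rw [← Finset.insert_erase (S.max'_mem (Finset.nonempty_iff_ne_empty.2 (Finset.mem_erase.1 hS).1))]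
  rw [key]
  rw [Finset.sum_sigma]
  have step2 : ∀ s ∈ Finset.Ioo 0 n,
      ∑ T ∈ (Finset.Ioo 0 s).powerset, chainProd α n (insert s T)
        = phiCoeff γ b s * α (n - s) := by
    intro s hs
    rw [Finset.mem_Ioo] at hs
    rw [phiCoeff_pos_eq γ b hs.1, ← hα, Finset.sum_mul]
    apply Finset.sum_congr rfl
    intro T hT
    rw [Finset.mem_powerset] at hT
    exact chainProd_insert_max (fun t ht => (Finset.mem_Ioo.1 (hT ht)).2)
  rw [Finset.sum_congr rfl step2, chainProd_empty]
  have : Finset.range n = insert 0 (Finset.Ioo 0 n) := by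
    rw [Finset.Ioo_insert_left hn, ← Nat.Ico_zero_eq_range]
  rw [this, Finset.sum_insert (by simp)]
  simp [phiCoeff]

variable (γ : ℝ) (b : ℕ → ℝ) (φ : ℕ → ℝ)

lemma btilde_antidiag (k : ℕ) :
    btildeSq γ b (k + 1) = ∑ p ∈ Finset.HasAntidiagonal.antidiagonal k, γ ^ p.1 * b (p.2 + 1) ^ 2 := by
  rw [Finset.Nat.sum_antidiagonal_eq_sum_range_succ_mk, btildeSq]
  apply Finset.sum_congr rfl
  intro i hi
  rw [Finset.mem_range] at hi
  have h : k + 1 - i = k - i + 1 := by omega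
  rw [h]

lemma btildeSq_nonneg (hγ0 : 0 ≤ γ) (j : ℕ) : 0 ≤ btildeSq γ b j :=
  Finset.sum_nonneg fun i _ => mul_nonneg (pow_nonneg hγ0 _) (sq_nonneg _)

lemma alpha_summable (hγ0 : 0 ≤ γ) (hγ1 : γ < 1)
    (hB2 : Summable (fun j : ℕ => b (j + 1) ^ 2)) :
    Summable (fun k : ℕ => btildeSq γ b (k + 1)) := by
  have hgeo : Summable (fun i : ℕ => γ ^ i) := summable_geometric_of_lt_one hγ0 hγ1
  have hprod : Summable (fun x : ℕ × ℕ => γ ^ x.1 * b (x.2 + 1) ^ 2) :=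
    Summable.mul_of_nonneg (f := fun i : ℕ => γ ^ i) (g := fun j : ℕ => b (j + 1) ^ 2)
      hgeo hB2 (fun i => pow_nonneg hγ0 i) (fun j => sq_nonneg _)
  have h2 := summable_sum_mul_antidiagonal_of_summable_mul
    (f := fun i : ℕ => γ ^ i) (g := fun j : ℕ => b (j + 1) ^ 2) hprod
  exact h2.congr fun k => (btilde_antidiag γ b k).symm

lemma alpha_tsum (hγ0 : 0 ≤ γ) (hγ1 : γ < 1)
    (hB2 : Summable (fun j : ℕ => b (j + 1) ^ 2)) :
    (∑' k : ℕ, btildeSq γ b (k + 1)) = (∑' j : ℕ, b (j + 1) ^ 2) / (1 - γ) := by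
  have hgeo : Summable (fun i : ℕ => γ ^ i) := summable_geometric_of_lt_one hγ0 hγ1
  have hprod : Summable (fun x : ℕ × ℕ => γ ^ x.1 * b (x.2 + 1) ^ 2) :=
    Summable.mul_of_nonneg (f := fun i : ℕ => γ ^ i) (g := fun j : ℕ => b (j + 1) ^ 2)
      hgeo hB2 (fun i => pow_nonneg hγ0 i) (fun j => sq_nonneg _)
  have h := Summable.tsum_mul_tsum_eq_tsum_sum_antidiagonal (f := fun i : ℕ => γ ^ i)
    (g := fun j : ℕ => b (j + 1) ^ 2) hgeo hB2 hprod
  rw [tsum_geometric_of_lt_one hγ0 hγ1] at h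
  have h3 : ∑' (n : ℕ), ∑ kl ∈ Finset.HasAntidiagonal.antidiagonal n, γ ^ kl.1 * b (kl.2 + 1) ^ 2
      = ∑' k : ℕ, btildeSq γ b (k + 1) := by
    congr 1
    ext k
    exact (btilde_antidiag γ b k).symm
  rw [h3] at h
  rw [← h, div_eq_inv_mul]

set_option maxHeartbeats 2000000 in
theorem part2 (hγ0 : 0 ≤ γ) (hγ1 : γ < 1)
    (hB2 : Summable (fun j : ℕ => b (j + 1) ^ 2))
    (hB2γ : (∑' j : ℕ, b (j + 1) ^ 2) / (1 - γ) < 1)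
    (hφ0 : φ 0 = 1)
    (hφrec : ∀ n : ℕ, 0 < n → φ n = ∑ s ∈ Finset.range n, φ s * btildeSq γ b (n - s))
    (hφnn : ∀ t, 0 ≤ φ t) :
    Summable φ ∧ (∑' t : ℕ, φ t) = (1 - γ) / (1 - γ - ∑' j : ℕ, b (j + 1) ^ 2) := by
  have h1γ : (0:ℝ) < 1 - γ := by linarith
  set B2 := ∑' j : ℕ, b (j + 1) ^ 2 with hB2def
  have hB2nn : 0 ≤ B2 := tsum_nonneg fun j => sq_nonneg _
  -- summability and value of A
  have hgeo : Summable (fun i : ℕ => γ ^ i) := summable_geometric_of_lt_one hγ0 hγ1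
  have hαsum : Summable (fun k : ℕ => btildeSq γ b (k + 1)) := alpha_summable γ b hγ0 hγ1 hB2
  have hAval : (∑' k : ℕ, btildeSq γ b (k + 1)) = B2 / (1 - γ) := alpha_tsum γ b hγ0 hγ1 hB2
  set A := ∑' k : ℕ, btildeSq γ b (k + 1) with hAdef
  have hA1 : A < 1 := by rw [hAval]; exact hB2γ
  have hAnn : 0 ≤ A := tsum_nonneg fun k => btildeSq_nonneg γ b hγ0 _
  have h1A : (0:ℝ) < 1 - A := by linarith
  have hαnn : ∀ j, 0 ≤ btildeSq γ b j := btildeSq_nonneg γ b hγ0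
  -- recurrence in antidiagonal form
  have hφrec' : ∀ t : ℕ, φ (t + 1) = ∑ p ∈ Finset.HasAntidiagonal.antidiagonal t, φ p.1 * btildeSq γ b (p.2 + 1) := by
    intro t
    rw [hφrec (t + 1) t.succ_pos, Finset.Nat.sum_antidiagonal_eq_sum_range_succ_mk]
    apply Finset.sum_congr rfl
    intro k hk
    rw [Finset.mem_range] at hk
    have h : t + 1 - k = t - k + 1 := by omega
    rw [h]
  -- bounded partial sums
  have hbdd : ∀ N : ℕ, ∑ t ∈ Finset.range N, φ t ≤ (1 - A)⁻¹ := by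
    intro N
    induction N with
    | zero => simp only [Finset.range_zero, Finset.sum_empty]; exact inv_nonneg.2 h1A.le
    | succ N ih =>
      rw [Finset.sum_range_succ']
      have hsum : ∑ t ∈ Finset.range N, φ (t + 1)
          ≤ (∑ t ∈ Finset.range N, φ t) * A := by
        calc ∑ t ∈ Finset.range N, φ (t + 1)
            = ∑ t ∈ Finset.range N, ∑ p ∈ Finset.HasAntidiagonal.antidiagonal t, φ p.1 * btildeSq γ b (p.2 + 1) := by
              exact Finset.sum_congr rfl fun t _ => hφrec' t
          _ = ∑ p ∈ (Finset.range N).biUnion Finset.HasAntidiagonal.antidiagonal, φ p.1 * btildeSq γ b (p.2 + 1) := by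
              rw [Finset.sum_biUnion]
              intro x hx y hy hxy
              simp only [Finset.disjoint_left]
              intro p hp hq
              rw [Finset.HasAntidiagonal.mem_antidiagonal] at hp hq
              exact hxy (hp ▸ hq)
          _ ≤ ∑ p ∈ Finset.range N ×ˢ Finset.range N, φ p.1 * btildeSq γ b (p.2 + 1) := by
              apply Finset.sum_le_sum_of_subset_of_nonneg
              · intro p hp
                rw [Finset.mem_biUnion] at hp
                obtain ⟨t, ht, hp⟩ := hp
                rw [Finset.mem_range] at ht
                rw [Finset.HasAntidiagonal.mem_antidiagonal] at hp
                rw [Finset.mem_product, Finset.mem_range, Finset.mem_range]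
                omega
              · intro p _ _
                exact mul_nonneg (hφnn _) (hαnn _)
          _ = (∑ t ∈ Finset.range N, φ t) * ∑ k ∈ Finset.range N, btildeSq γ b (k + 1) := by
              rw [Finset.sum_mul_sum, Finset.sum_product]
          _ ≤ (∑ t ∈ Finset.range N, φ t) * A := by
              apply mul_le_mul_of_nonneg_left _ (Finset.sum_nonneg fun t _ => hφnn t)
              exact Summable.sum_le_tsum _ (fun k _ => hαnn _) hαsum
      have : (∑ t ∈ Finset.range N, φ t) * A ≤ (1 - A)⁻¹ * A :=
        mul_le_mul_of_nonneg_right ih hAnn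
      have hφ0' : φ 0 = 1 := hφ0
      rw [hφ0']
      have : (1 - A)⁻¹ * A + 1 ≤ (1 - A)⁻¹ := by
        rw [← sub_nonneg]
        have : (1 - A)⁻¹ - ((1 - A)⁻¹ * A + 1) = 0 := by
          field_simp
          ring
        rw [this]
      linarith
  have hφsum : Summable φ := summable_of_sum_range_le hφnn hbdd
  refine ⟨hφsum, ?_⟩
  -- tsum identity
  have hprod2 : Summable (fun x : ℕ × ℕ => φ x.1 * btildeSq γ b (x.2 + 1)) :=
    Summable.mul_of_nonneg (f := φ) (g := fun k : ℕ => btildeSq γ b (k + 1))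
      hφsum hαsum (fun t => hφnn t) (fun k => hαnn _)
  have htail : (∑' t : ℕ, φ t) * A = ∑' t : ℕ, φ (t + 1) := by
    have h5 := Summable.tsum_mul_tsum_eq_tsum_sum_antidiagonal (f := φ)
      (g := fun k : ℕ => btildeSq γ b (k + 1)) hφsum hαsum hprod2
    rw [hAdef, h5]
    exact tsum_congr fun t => (hφrec' t).symm
  have hS : (∑' t : ℕ, φ t) = 1 + (∑' t : ℕ, φ t) * A := by
    conv_lhs => rw [hφsum.tsum_eq_zero_add]
    rw [hφ0, htail]
  have hB2lt : B2 < 1 - γ := (div_lt_one h1γ).1 hB2γ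
  have h' : (0:ℝ) < 1 - γ - B2 := by linarith
  have hSne : (∑' t : ℕ, φ t) * (1 - A) = 1 := by linarith [hS]
  have hSval : (∑' t : ℕ, φ t) = (1 - A)⁻¹ :=
    eq_inv_of_mul_eq_one_right (by rw [mul_comm]; exact hSne)
  have hstep : (1 : ℝ) - B2 / (1 - γ) = (1 - γ - B2) / (1 - γ) := by field_simp
  rw [hSval, hAval, hstep, inv_div]

theorem stepI (β d : ℝ) (b : ℕ → ℝ)
    (hβ : 0 < β)
    (hbasymp : Filter.Tendsto
      (fun j : ℕ => b (j + 1) / (β * ((j : ℝ) + 1) ^ (d - 1))) Filter.atTop (nhds 1)) :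
    ∃ Cb : ℝ, 0 < Cb ∧ ∀ k : ℕ, 1 ≤ k → b k ^ 2 ≤ Cb * (k : ℝ) ^ (2 * d - 2) := by
  have habs : Filter.Tendsto
      (fun j : ℕ => |b (j + 1) / (β * ((j : ℝ) + 1) ^ (d - 1))|) Filter.atTop (nhds 1) := by
    simpa using hbasymp.abs
  obtain ⟨C0, hC0⟩ := habs.bddAbove_range
  have hC0' : ∀ j : ℕ, |b (j + 1) / (β * ((j : ℝ) + 1) ^ (d - 1))| ≤ C0 :=
    fun j => hC0 (Set.mem_range_self j)
  refine ⟨C0 ^ 2 * β ^ 2 + 1, by positivity, ?_⟩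
  intro k hk
  obtain ⟨j, rfl⟩ : ∃ j, k = j + 1 := ⟨k - 1, by omega⟩
  have hx : (0:ℝ) < (j : ℝ) + 1 := by positivity
  have hden : (0:ℝ) < β * ((j : ℝ) + 1) ^ (d - 1) :=
    mul_pos hβ (Real.rpow_pos_of_pos hx _)
  set r := b (j + 1) / (β * ((j : ℝ) + 1) ^ (d - 1)) with hrdef
  have hb : b (j + 1) = r * (β * ((j : ℝ) + 1) ^ (d - 1)) := by
    rw [hrdef, div_mul_cancel₀ _ (ne_of_gt hden)]
  have hpow : (((j : ℝ) + 1) ^ (d - 1)) ^ 2 = ((j : ℝ) + 1) ^ (2 * d - 2) := by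
    rw [sq, ← Real.rpow_add hx]
    ring_nf
  have hcast : (((j : ℕ) + 1 : ℕ) : ℝ) = (j : ℝ) + 1 := by push_cast; ring
  rw [hcast]
  have h1 : b (j + 1) ^ 2 = r ^ 2 * β ^ 2 * (((j : ℝ) + 1) ^ (d - 1)) ^ 2 := by
    rw [hb]; ring
  rw [h1, hpow]
  have hr2 : r ^ 2 ≤ C0 ^ 2 := by
    have := hC0' j
    rw [← hrdef] at this
    nlinarith [abs_nonneg r, sq_abs r]
  have hrp : (0:ℝ) ≤ ((j : ℝ) + 1) ^ (2 * d - 2) := Real.rpow_nonneg (le_of_lt hx) _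
  nlinarith [sq_nonneg β, hrp, mul_le_mul_of_nonneg_right hr2 (mul_nonneg (sq_nonneg β) hrp)]

theorem stepJ (γ d : ℝ) (b : ℕ → ℝ) (hγ0 : 0 ≤ γ) (hγ1 : γ < 1)
    (hd0 : 0 < d) (hd1 : d < 1 / 2)
    {Cb : ℝ} (hCb : 0 < Cb) (hb : ∀ k : ℕ, 1 ≤ k → b k ^ 2 ≤ Cb * (k : ℝ) ^ (2 * d - 2)) :
    ∃ K : ℝ, 0 < K ∧ ∀ n : ℕ, 1 ≤ n → btildeSq γ b n ≤ K * (n : ℝ) ^ (2 * d - 2) := by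
  classical
  have h1γ : (0:ℝ) < 1 - γ := by linarith
  set δ := Real.sqrt γ with hδdef
  have hδ0 : 0 ≤ δ := Real.sqrt_nonneg _
  have hγδ : δ ^ 2 = γ := Real.sq_sqrt hγ0
  have hδ1 : δ < 1 := by nlinarith
  have htend := tendsto_pow_const_mul_const_pow_of_lt_one 3 hδ0 hδ1
  obtain ⟨C3, hC3⟩ := htend.bddAbove_range
  have hC3' : ∀ n : ℕ, (n : ℝ) ^ (3:ℕ) * δ ^ n ≤ C3 := fun n => hC3 (Set.mem_range_self n)
  have hC30 : 0 ≤ C3 := le_trans (by norm_num) (hC3' 0)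
  refine ⟨Cb * (2:ℝ) ^ (2 - 2 * d) * (1 - γ)⁻¹ + Cb * C3 + 1, by positivity, ?_⟩
  intro n hn
  have hn0 : (0:ℝ) < n := by exact_mod_cast hn
  have hn1 : (1:ℝ) ≤ n := by exact_mod_cast hn
  have hnp : (0:ℝ) ≤ (n:ℝ) ^ (2 * d - 2) := Real.rpow_nonneg hn0.le _
  rw [btildeSq, ← Finset.sum_filter_add_sum_filter_not (Finset.range n) (fun i => 2 * i ≤ n)]
  have hbound1 : ∑ i ∈ (Finset.range n).filter (fun i => 2 * i ≤ n), γ ^ i * b (n - i) ^ 2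
      ≤ Cb * (2:ℝ) ^ (2 - 2 * d) * (1 - γ)⁻¹ * (n:ℝ) ^ (2 * d - 2) := by
    have hterm : ∀ i ∈ (Finset.range n).filter (fun i => 2 * i ≤ n),
        γ ^ i * b (n - i) ^ 2 ≤ γ ^ i * (Cb * ((2:ℝ) ^ (2 - 2 * d) * (n:ℝ) ^ (2 * d - 2))) := by
      intro i hi
      rw [Finset.mem_filter, Finset.mem_range] at hi
      obtain ⟨hin, h2i⟩ := hi
      have hsub : 1 ≤ n - i := by omega
      have hcast : (((n - i : ℕ)) : ℝ) = (n:ℝ) - i := by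
        have : i ≤ n := le_of_lt hin
        push_cast [this]; ring
      have hge : (n:ℝ) / 2 ≤ ((n - i : ℕ) : ℝ) := by
        rw [hcast]
        have : (2 * i : ℝ) ≤ n := by exact_mod_cast h2i
        linarith
      have hhalf : (0:ℝ) < (n:ℝ) / 2 := by positivity
      have hb1 : b (n - i) ^ 2 ≤ Cb * ((n - i : ℕ) : ℝ) ^ (2 * d - 2) := hb _ hsub
      have hb2 : ((n - i : ℕ) : ℝ) ^ (2 * d - 2) ≤ ((n:ℝ) / 2) ^ (2 * d - 2) :=
        Real.rpow_le_rpow_of_nonpos hhalf hge (by linarith)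
      have hb3 : ((n:ℝ) / 2) ^ (2 * d - 2) = (2:ℝ) ^ (2 - 2 * d) * (n:ℝ) ^ (2 * d - 2) := by
        rw [Real.div_rpow hn0.le (by norm_num : (0:ℝ) ≤ 2)]
        rw [div_eq_mul_inv, ← Real.rpow_neg (by norm_num : (0:ℝ) ≤ 2)]
        rw [mul_comm]
        ring_nf
      apply mul_le_mul_of_nonneg_left _ (pow_nonneg hγ0 i)
      calc b (n - i) ^ 2 ≤ Cb * ((n - i : ℕ) : ℝ) ^ (2 * d - 2) := hb1
        _ ≤ Cb * ((n:ℝ) / 2) ^ (2 * d - 2) := mul_le_mul_of_nonneg_left hb2 hCb.le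
        _ = Cb * ((2:ℝ) ^ (2 - 2 * d) * (n:ℝ) ^ (2 * d - 2)) := by rw [hb3]
    calc ∑ i ∈ (Finset.range n).filter (fun i => 2 * i ≤ n), γ ^ i * b (n - i) ^ 2
        ≤ ∑ i ∈ (Finset.range n).filter (fun i => 2 * i ≤ n),
            γ ^ i * (Cb * ((2:ℝ) ^ (2 - 2 * d) * (n:ℝ) ^ (2 * d - 2))) :=
          Finset.sum_le_sum hterm
      _ = (∑ i ∈ (Finset.range n).filter (fun i => 2 * i ≤ n), γ ^ i)
            * (Cb * ((2:ℝ) ^ (2 - 2 * d) * (n:ℝ) ^ (2 * d - 2))) := by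
          rw [Finset.sum_mul]
      _ ≤ (1 - γ)⁻¹ * (Cb * ((2:ℝ) ^ (2 - 2 * d) * (n:ℝ) ^ (2 * d - 2))) := by
          apply mul_le_mul_of_nonneg_right _ (by positivity)
          calc ∑ i ∈ (Finset.range n).filter (fun i => 2 * i ≤ n), γ ^ i
              ≤ ∑ i ∈ Finset.range n, γ ^ i :=
                Finset.sum_le_sum_of_subset_of_nonneg (Finset.filter_subset _ _)
                  (fun i _ _ => pow_nonneg hγ0 i)
            _ ≤ ∑' i : ℕ, γ ^ i := Summable.sum_le_tsum _ (fun i _ => pow_nonneg hγ0 i)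
                  (summable_geometric_of_lt_one hγ0 hγ1)
            _ = (1 - γ)⁻¹ := tsum_geometric_of_lt_one hγ0 hγ1
      _ = Cb * (2:ℝ) ^ (2 - 2 * d) * (1 - γ)⁻¹ * (n:ℝ) ^ (2 * d - 2) := by ring
  have hbound2 : ∑ i ∈ (Finset.range n).filter (fun i => ¬ 2 * i ≤ n), γ ^ i * b (n - i) ^ 2
      ≤ Cb * C3 * (n:ℝ) ^ (2 * d - 2) := by
    have hterm : ∀ i ∈ (Finset.range n).filter (fun i => ¬ 2 * i ≤ n),
        γ ^ i * b (n - i) ^ 2 ≤ Cb * δ ^ n := by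
      intro i hi
      rw [Finset.mem_filter, Finset.mem_range] at hi
      obtain ⟨hin, h2i⟩ := hi
      have hsub : 1 ≤ n - i := by omega
      have hγi : γ ^ i ≤ δ ^ n := by
        rw [← hγδ, ← pow_mul]
        exact pow_le_pow_of_le_one hδ0 hδ1.le (by omega)
      have hsub1 : (1:ℝ) ≤ ((n - i : ℕ) : ℝ) := by exact_mod_cast hsub
      have hb1 : b (n - i) ^ 2 ≤ Cb * ((n - i : ℕ) : ℝ) ^ (2 * d - 2) := hb _ hsub
      have hb2 : ((n - i : ℕ) : ℝ) ^ (2 * d - 2) ≤ 1 :=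
        Real.rpow_le_one_of_one_le_of_nonpos hsub1 (by linarith)
      have hbb : b (n - i) ^ 2 ≤ Cb := by nlinarith
      have := mul_le_mul hγi hbb (sq_nonneg _) (pow_nonneg hδ0 n)
      linarith [this]
    calc ∑ i ∈ (Finset.range n).filter (fun i => ¬ 2 * i ≤ n), γ ^ i * b (n - i) ^ 2
        ≤ ∑ i ∈ (Finset.range n).filter (fun i => ¬ 2 * i ≤ n), Cb * δ ^ n :=
          Finset.sum_le_sum hterm
      _ = (((Finset.range n).filter (fun i => ¬ 2 * i ≤ n)).card : ℝ) * (Cb * δ ^ n) := by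
          rw [Finset.sum_const, nsmul_eq_mul]
      _ ≤ (n : ℝ) * (Cb * δ ^ n) := by
          apply mul_le_mul_of_nonneg_right _ (by positivity)
          have := Finset.card_filter_le (Finset.range n) (fun i => ¬ 2 * i ≤ n)
          rw [Finset.card_range] at this
          exact_mod_cast this
      _ = Cb * ((n : ℝ) * δ ^ n) := by ring
      _ ≤ Cb * (C3 * (n:ℝ) ^ (2 * d - 2)) := by
          apply mul_le_mul_of_nonneg_left _ hCb.le
          have hkey : (n:ℝ) * δ ^ n = ((n:ℝ) ^ (3:ℕ) * δ ^ n) * (n:ℝ) ^ (-2:ℝ) := by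
            have h3 : ((n:ℝ) ^ (3:ℕ) : ℝ) = (n:ℝ) ^ ((3:ℕ):ℝ) := (Real.rpow_natCast _ 3).symm
            rw [h3]
            rw [mul_comm ((n:ℝ) ^ ((3:ℕ):ℝ)) (δ ^ n), mul_assoc, ← Real.rpow_add hn0]
            norm_num
            ring
          rw [hkey]
          calc ((n:ℝ) ^ (3:ℕ) * δ ^ n) * (n:ℝ) ^ (-2:ℝ)
              ≤ C3 * (n:ℝ) ^ (-2:ℝ) :=
                mul_le_mul_of_nonneg_right (hC3' n) (Real.rpow_nonneg hn0.le _)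
            _ ≤ C3 * (n:ℝ) ^ (2 * d - 2) :=
                mul_le_mul_of_nonneg_left
                  (Real.rpow_le_rpow_of_exponent_le hn1 (by linarith)) hC30
      _ = Cb * C3 * (n:ℝ) ^ (2 * d - 2) := by ring
  nlinarith [hbound1, hbound2, hnp]

theorem stepK (γ d : ℝ) (b : ℕ → ℝ) (φ : ℕ → ℝ)
    (hd0 : 0 < d) (hd1 : d < 1 / 2)
    (hφrec : ∀ n : ℕ, 0 < n → φ n = ∑ s ∈ Finset.range n, φ s * btildeSq γ b (n - s))
    (hφnn : ∀ t, 0 ≤ φ t)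
    (hαnn : ∀ j, 0 ≤ btildeSq γ b j)
    (hαsum : Summable (fun k : ℕ => btildeSq γ b (k + 1)))
    (hA1 : (∑' k : ℕ, btildeSq γ b (k + 1)) < 1)
    (hφsum : Summable φ)
    {K : ℝ} (hK : 0 < K)
    (hα : ∀ n : ℕ, 1 ≤ n → btildeSq γ b n ≤ K * (n : ℝ) ^ (2 * d - 2)) :
    (fun t : ℕ => φ t) =O[Filter.atTop] fun t : ℕ => (t : ℝ) ^ (2 * d - 2) := by
  classical
  set A := ∑' k : ℕ, btildeSq γ b (k + 1) with hAdef
  have hA0 : 0 ≤ A := tsum_nonneg fun k => hαnn _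
  set S := ∑' t : ℕ, φ t with hSdef
  have hS0 : 0 ≤ S := tsum_nonneg hφnn
  -- choice of ε and q
  set A' := max A (1/2) with hA'def
  have hA'0 : (0:ℝ) < A' := lt_of_lt_of_le (by norm_num) (le_max_right _ _)
  have hA'1 : A' < 1 := max_lt hA1 (by norm_num)
  have hAA' : A ≤ A' := le_max_left _ _
  have h2d : (0:ℝ) < 2 - 2 * d := by linarith
  set u := A' ^ ((2 - 2 * d)⁻¹ : ℝ) with hudef
  have hu0 : 0 < u := Real.rpow_pos_of_pos hA'0 _
  have hu1 : u < 1 := Real.rpow_lt_one hA'0.le hA'1 (by positivity)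
  set ε := (1 - u) / 2 with hεdef
  have hε0 : 0 < ε := by rw [hεdef]; linarith
  have hε1 : ε < 1 := by rw [hεdef]; linarith
  have hu1ε : u < 1 - ε := by rw [hεdef]; linarith
  have h1ε0 : (0:ℝ) < 1 - ε := lt_trans hu0 hu1ε
  have huA : u ^ (2 - 2 * d) = A' := by
    rw [hudef, ← Real.rpow_mul hA'0.le, inv_mul_cancel₀ (ne_of_gt h2d), Real.rpow_one]
  have hq' : A' < (1 - ε) ^ (2 - 2 * d) := by
    rw [← huA]
    exact Real.rpow_lt_rpow hu0.le hu1ε h2d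
  set q := (1 - ε) ^ (2 * d - 2) * A with hqdef
  have hεpow : (1 - ε) ^ (2 * d - 2) = ((1 - ε) ^ (2 - 2 * d))⁻¹ := by
    have h : (2 * d - 2 : ℝ) = -(2 - 2 * d) := by ring
    rw [h, Real.rpow_neg h1ε0.le]
  have hq0 : 0 ≤ q := mul_nonneg (Real.rpow_nonneg h1ε0.le _) hA0
  have hX : (0:ℝ) < (1 - ε) ^ (2 - 2 * d) := Real.rpow_pos_of_pos h1ε0 _
  have hq1 : q < 1 := by
    rw [hqdef, hεpow]
    have hAX : A < (1 - ε) ^ (2 - 2 * d) := lt_of_le_of_lt hAA' hq'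
    have := (div_lt_one hX).2 hAX
    rw [div_eq_inv_mul] at this
    exact this
  have h1q : (0:ℝ) < 1 - q := by linarith
  set M := max 1 (K * S * ε ^ (2 * d - 2) / (1 - q)) with hMdef
  have hM1 : (1:ℝ) ≤ M := le_max_left _ _
  have hM0 : (0:ℝ) < M := lt_of_lt_of_le one_pos hM1
  have hMq : K * S * ε ^ (2 * d - 2) ≤ M * (1 - q) :=
    (div_le_iff₀ h1q).1 (le_max_right _ _)
  -- main induction
  have main : ∀ n : ℕ, 1 ≤ n → φ n ≤ M * (n : ℝ) ^ (2 * d - 2) := by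
    intro n
    induction n using Nat.strong_induction_on with
    | _ n ih =>
    intro hn
    have hn0 : (0:ℝ) < n := by exact_mod_cast hn
    have hnp : (0:ℝ) ≤ (n:ℝ) ^ (2 * d - 2) := Real.rpow_nonneg hn0.le _
    rw [hφrec n hn]
    rw [← Finset.sum_filter_add_sum_filter_not (Finset.range n)
      (fun s : ℕ => ((n:ℝ) - (s:ℝ) ≤ ε * n))]
    have hA_partial : ∀ (F : Finset ℕ), F ⊆ Finset.range n →
        ∑ s ∈ F, btildeSq γ b (n - s) ≤ A := by
      intro F hF
      calc ∑ s ∈ F, btildeSq γ b (n - s)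
          ≤ ∑ s ∈ Finset.range n, btildeSq γ b (n - s) :=
            Finset.sum_le_sum_of_subset_of_nonneg hF (fun i _ _ => hαnn _)
        _ = ∑ k ∈ Finset.range n, btildeSq γ b (k + 1) := by
            rw [← Finset.sum_range_reflect]
            apply Finset.sum_congr rfl
            intro j hj
            rw [Finset.mem_range] at hj
            congr 1
            omega
        _ ≤ A := Summable.sum_le_tsum _ (fun k _ => hαnn _) hαsum
    have hb1 : ∑ s ∈ (Finset.range n).filter (fun s : ℕ => ((n:ℝ) - (s:ℝ) ≤ ε * n)),
        φ s * btildeSq γ b (n - s) ≤ M * q * (n:ℝ) ^ (2 * d - 2) := by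
      set c1 := M * ((1 - ε) ^ (2 * d - 2) * (n:ℝ) ^ (2 * d - 2)) with hc1def
      have hc10 : 0 ≤ c1 := by positivity
      have hterm : ∀ s ∈ (Finset.range n).filter (fun s : ℕ => ((n:ℝ) - (s:ℝ) ≤ ε * n)),
          φ s * btildeSq γ b (n - s) ≤ c1 * btildeSq γ b (n - s) := by
        intro s hs
        rw [Finset.mem_filter, Finset.mem_range] at hs
        obtain ⟨hsn, hsε⟩ := hs
        have hsge : (1 - ε) * n ≤ (s:ℝ) := by nlinarith
        have hs1 : 1 ≤ s := by
          by_contra h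
          push_neg at h
          interval_cases s
          · simp at hsge; nlinarith
        have hφs : φ s ≤ M * (s:ℝ) ^ (2 * d - 2) := ih s hsn hs1
        have hs2 : (s:ℝ) ^ (2 * d - 2) ≤ ((1 - ε) * n) ^ (2 * d - 2) :=
          Real.rpow_le_rpow_of_nonpos (by positivity) hsge (by linarith)
        have hc1 : φ s ≤ c1 := by
          rw [hc1def, ← Real.mul_rpow h1ε0.le hn0.le]
          calc φ s ≤ M * (s:ℝ) ^ (2 * d - 2) := hφs
            _ ≤ M * ((1 - ε) * n) ^ (2 * d - 2) := mul_le_mul_of_nonneg_left hs2 hM0.le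
        exact mul_le_mul_of_nonneg_right hc1 (hαnn _)
      calc ∑ s ∈ (Finset.range n).filter (fun s : ℕ => ((n:ℝ) - (s:ℝ) ≤ ε * n)),
            φ s * btildeSq γ b (n - s)
          ≤ ∑ s ∈ (Finset.range n).filter (fun s : ℕ => ((n:ℝ) - (s:ℝ) ≤ ε * n)),
            c1 * btildeSq γ b (n - s) := Finset.sum_le_sum hterm
        _ = c1 * ∑ s ∈ (Finset.range n).filter (fun s : ℕ => ((n:ℝ) - (s:ℝ) ≤ ε * n)),
            btildeSq γ b (n - s) := by rw [Finset.mul_sum]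
        _ ≤ c1 * A := mul_le_mul_of_nonneg_left
            (hA_partial _ (Finset.filter_subset _ _)) hc10
        _ = M * q * (n:ℝ) ^ (2 * d - 2) := by rw [hc1def, hqdef]; ring
    have hb2 : ∑ s ∈ (Finset.range n).filter (fun s : ℕ => ¬ ((n:ℝ) - (s:ℝ) ≤ ε * n)),
        φ s * btildeSq γ b (n - s) ≤ M * (1 - q) * (n:ℝ) ^ (2 * d - 2) := by
      set c2 := K * (ε * n) ^ (2 * d - 2) with hc2def
      have hc20 : 0 ≤ c2 := by positivity
      have hterm : ∀ s ∈ (Finset.range n).filter (fun s : ℕ => ¬ ((n:ℝ) - (s:ℝ) ≤ ε * n)),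
          φ s * btildeSq γ b (n - s) ≤ φ s * c2 := by
        intro s hs
        rw [Finset.mem_filter, Finset.mem_range] at hs
        obtain ⟨hsn, hsε⟩ := hs
        push_neg at hsε
        have hcast : (((n - s : ℕ)) : ℝ) = (n:ℝ) - s := by
          have : s ≤ n := le_of_lt hsn
          push_cast [this]; ring
        have hm1 : 1 ≤ n - s := by omega
        have hmge : ε * n ≤ ((n - s : ℕ) : ℝ) := by rw [hcast]; linarith
        have hα1 : btildeSq γ b (n - s) ≤ K * ((n - s : ℕ) : ℝ) ^ (2 * d - 2) := hα _ hm1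
        have hα2 : ((n - s : ℕ) : ℝ) ^ (2 * d - 2) ≤ (ε * n) ^ (2 * d - 2) :=
          Real.rpow_le_rpow_of_nonpos (by positivity) hmge (by linarith)
        have : btildeSq γ b (n - s) ≤ c2 := by
          rw [hc2def]
          calc btildeSq γ b (n - s) ≤ K * ((n - s : ℕ) : ℝ) ^ (2 * d - 2) := hα1
            _ ≤ K * (ε * n) ^ (2 * d - 2) := mul_le_mul_of_nonneg_left hα2 hK.le
        exact mul_le_mul_of_nonneg_left this (hφnn s)
      calc ∑ s ∈ (Finset.range n).filter (fun s : ℕ => ¬ ((n:ℝ) - (s:ℝ) ≤ ε * n)),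
            φ s * btildeSq γ b (n - s)
          ≤ ∑ s ∈ (Finset.range n).filter (fun s : ℕ => ¬ ((n:ℝ) - (s:ℝ) ≤ ε * n)), φ s * c2 :=
            Finset.sum_le_sum hterm
        _ = (∑ s ∈ (Finset.range n).filter (fun s : ℕ => ¬ ((n:ℝ) - (s:ℝ) ≤ ε * n)), φ s) * c2 := by
            rw [Finset.sum_mul]
        _ ≤ S * c2 := by
            apply mul_le_mul_of_nonneg_right _ hc20
            calc ∑ s ∈ (Finset.range n).filter (fun s : ℕ => ¬ ((n:ℝ) - (s:ℝ) ≤ ε * n)), φ s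
                ≤ ∑' t : ℕ, φ t := Summable.sum_le_tsum _ (fun i _ => hφnn i) hφsum
              _ = S := rfl
        _ ≤ M * (1 - q) * (n:ℝ) ^ (2 * d - 2) := by
            rw [hc2def, Real.mul_rpow hε0.le hn0.le]
            calc S * (K * (ε ^ (2 * d - 2) * (n:ℝ) ^ (2 * d - 2)))
                = (K * S * ε ^ (2 * d - 2)) * (n:ℝ) ^ (2 * d - 2) := by ring
              _ ≤ (M * (1 - q)) * (n:ℝ) ^ (2 * d - 2) :=
                  mul_le_mul_of_nonneg_right hMq hnp
    calc (∑ s ∈ (Finset.range n).filter (fun s : ℕ => ((n:ℝ) - (s:ℝ) ≤ ε * n)),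
          φ s * btildeSq γ b (n - s))
        + ∑ s ∈ (Finset.range n).filter (fun s : ℕ => ¬ ((n:ℝ) - (s:ℝ) ≤ ε * n)),
          φ s * btildeSq γ b (n - s)
        ≤ M * q * (n:ℝ) ^ (2 * d - 2) + M * (1 - q) * (n:ℝ) ^ (2 * d - 2) :=
          add_le_add hb1 hb2
      _ = M * (n:ℝ) ^ (2 * d - 2) := by ring
  rw [Asymptotics.isBigO_iff]
  refine ⟨M, Filter.eventually_atTop.2 ⟨1, fun n hn => ?_⟩⟩
  rw [Real.norm_of_nonneg (hφnn n), Real.norm_of_nonneg (Real.rpow_nonneg (Nat.cast_nonneg n) _)]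
  exact main n hn

/-- Relation (39)-(40) in the proof of Theorem 3: if `γ ∈ [0,1)`, `b_j ~ β j^{d-1}` with
`0 < d < 1/2`, `β > 0`, and `B₂ = ∑_{j≥1} b_j²` satisfies `B₂/(1-γ) < 1`, then
`φ_{t,γ} = O(t^{2d-2})` as `t → ∞` and
`Φ_γ(1) = ∑_{t≥0} φ_{t,γ} = (1-γ)/(1-γ-B₂) < ∞`. -/
theorem statement_16 (γ β d : ℝ) (b : ℕ → ℝ)
    (hγ0 : 0 ≤ γ) (hγ1 : γ < 1)
    (hβ : 0 < β) (hd0 : 0 < d) (hd1 : d < 1 / 2)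
    (hbasymp : Filter.Tendsto
      (fun j : ℕ => b (j + 1) / (β * ((j : ℝ) + 1) ^ (d - 1))) Filter.atTop (nhds 1))
    (hB2 : Summable (fun j : ℕ => b (j + 1) ^ 2))
    (hB2γ : (∑' j : ℕ, b (j + 1) ^ 2) / (1 - γ) < 1) :
    ((fun t : ℕ => phiCoeff γ b t) =O[Filter.atTop] fun t : ℕ => (t : ℝ) ^ (2 * d - 2)) ∧
    Summable (phiCoeff γ b) ∧
    (∑' t : ℕ, phiCoeff γ b t) = (1 - γ) / (1 - γ - ∑' j : ℕ, b (j + 1) ^ 2) := by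
  classical
  have hαnn : ∀ j, 0 ≤ btildeSq γ b j := btildeSq_nonneg γ b hγ0
  have hφnn : ∀ t, 0 ≤ phiCoeff γ b t := by
    intro t
    cases t with
    | zero => exact zero_le_one
    | succ j =>
      exact Finset.sum_nonneg fun S _ => chainProd_nonneg hαnn _ _
  have hφ0 : phiCoeff γ b 0 = 1 := rfl
  have hφrec : ∀ n : ℕ, 0 < n →
      phiCoeff γ b n = ∑ s ∈ Finset.range n, phiCoeff γ b s * btildeSq γ b (n - s) :=
    fun n hn => phiCoeff_rec γ b hn
  obtain ⟨hφsum, htsum⟩ := part2 γ b (phiCoeff γ b) hγ0 hγ1 hB2 hB2γ hφ0 hφrec hφnn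
  obtain ⟨Cb, hCb, hbb⟩ := stepI β d b hβ hbasymp
  obtain ⟨K, hK, hα⟩ := stepJ γ d b hγ0 hγ1 hd0 hd1 hCb hbb
  have hαsum : Summable (fun k : ℕ => btildeSq γ b (k + 1)) := alpha_summable γ b hγ0 hγ1 hB2
  have hA1 : (∑' k : ℕ, btildeSq γ b (k + 1)) < 1 := by
    rw [alpha_tsum γ b hγ0 hγ1 hB2]
    exact hB2γ
  exact ⟨stepK γ d b (phiCoeff γ b) hd0 hd1 hφrec hφnn hαnn hαsum hA1 hφsum hK hα,
    hφsum, htsum⟩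

end
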